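/- Let N be a random variable with the Poisson–gamma distribution PG(t, α, β) (α > 0, β > 0, t ≥ 0) and let L ≥ 1 be a natural number (the enrollment cap). Then the second moment of the capped variable min(N, L) satisfies Σ_{k=0}^{∞} min(k, L)² · p(k; t, α, β) = (α(α+1)t²/β²) · Σ_{k=0}^{L-3} p(k; t, α+2, β) + (αt/β) · Σ_{k=0}^{L-2} p(k; t, α+1, β) + L² · (1 − Σ_{k=0}^{L-1} p(k; t, α, β)), where a sum over an empty range equals 0. -/

import Mathlib

open Real Finset

/-- Poisson–gamma probability mass function `p(k; t, α, β)`. -/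
noncomputable def pgPMF (t α β : ℝ) (k : ℕ) : ℝ :=
  Real.Gamma (α + k) / (Nat.factorial k * Real.Gamma α) *
    (t ^ k * β ^ α / (β + t) ^ (α + (k : ℝ)))

lemma pgPMF_nonneg {t α β : ℝ} (hα : 0 < α) (hβ : 0 < β) (ht : 0 ≤ t) (k : ℕ) :
    0 ≤ pgPMF t α β k := by
  have hk : (0:ℝ) ≤ α + k := by positivity
  have h1 : 0 ≤ Real.Gamma (α + k) := Real.Gamma_nonneg_of_nonneg hk
  have h2 : 0 ≤ Real.Gamma α := Real.Gamma_nonneg_of_nonneg hα.le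
  have h3 : (0:ℝ) ≤ β + t := by linarith
  unfold pgPMF
  positivity

open MeasureTheory ProbabilityTheory in
open scoped NNReal ENNReal in
lemma hasSum_pgPMF {t α β : ℝ} (hα : 0 < α) (hβ : 0 < β) (ht : 0 ≤ t) :
    HasSum (pgPMF t α β) 1 := by
  have hbt : (0:ℝ) < β + t := by linarith
  have hP := pgPMF_nonneg hα hβ ht
  have hak : ∀ k : ℕ, (0:ℝ) < α + k := fun k =>
    add_pos_of_pos_of_nonneg hα (Nat.cast_nonneg k)
  have key : ∀ k : ℕ, ENNReal.ofReal (pgPMF t α β k) =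
      ∫⁻ x, ENNReal.ofReal (pgPMF t α β k) * gammaPDF (α + k) (β + t) x := by
    intro k
    rw [lintegral_const_mul _
        (show Measurable (gammaPDF (α + (k:ℕ)) (β + t)) from
          (measurable_gammaPDFReal _ _).ennreal_ofReal),
      lintegral_gammaPDF_eq_one (hak k) hbt, mul_one]
  have htsum : ∑' k : ℕ, ENNReal.ofReal (pgPMF t α β k) = 1 := by
    calc ∑' k : ℕ, ENNReal.ofReal (pgPMF t α β k)
        = ∑' k : ℕ, ∫⁻ x, ENNReal.ofReal (pgPMF t α β k) * gammaPDF (α + k) (β + t) x :=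
          tsum_congr key
      _ = ∫⁻ x, ∑' k : ℕ, ENNReal.ofReal (pgPMF t α β k) * gammaPDF (α + k) (β + t) x :=
          (lintegral_tsum fun k =>
            (((measurable_gammaPDFReal _ _).ennreal_ofReal).const_mul _).aemeasurable).symm
      _ = ∫⁻ x, gammaPDF α β x := by
          refine lintegral_congr_ae ?_
          have h0 : ∀ᵐ (x : ℝ), x ≠ 0 := by
            refine (MeasureTheory.ae_iff).2 ?_
            have : {a : ℝ | ¬ a ≠ 0} = {0} := by ext a; simp
            rw [this]
            exact measure_singleton 0
          filter_upwards [h0] with x hx0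
          rcases lt_or_gt_of_ne hx0 with hx | hx
          · simp only [gammaPDF_of_neg hx, mul_zero, tsum_zero]
          · have hxle : (0:ℝ) ≤ x := hx.le
            have hterm : ∀ k : ℕ, pgPMF t α β k * gammaPDFReal (α + k) (β + t) x
                = ((t*x)^k / k.factorial * Real.exp (-(t*x))) * gammaPDFReal α β x := by
              intro k
              unfold pgPMF gammaPDFReal
              rw [if_pos hxle, if_pos hxle]
              have hr1 : x ^ (α + (k:ℝ) - 1) = x ^ (α - 1) * x ^ k := by
                rw [← Real.rpow_natCast x k, ← Real.rpow_add hx]; congr 1; ring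
              have hexp : Real.exp (-((β+t)*x)) = Real.exp (-(β*x)) * Real.exp (-(t*x)) := by
                rw [← Real.exp_add]; congr 1; ring
              rw [hr1, hexp]
              have n1 : Real.Gamma (α + k) ≠ 0 := (Real.Gamma_pos_of_pos (hak k)).ne'
              have n2 : Real.Gamma α ≠ 0 := (Real.Gamma_pos_of_pos hα).ne'
              have n3 : (β+t) ^ (α + (k:ℝ)) ≠ 0 := (Real.rpow_pos_of_pos hbt _).ne'
              have n4 : ((k.factorial : ℝ)) ≠ 0 := Nat.cast_ne_zero.mpr k.factorial_ne_zero
              field_simp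
              ring
            calc ∑' k : ℕ, ENNReal.ofReal (pgPMF t α β k) * gammaPDF (α + k) (β + t) x
                = ∑' k : ℕ, ENNReal.ofReal (((t*x)^k / k.factorial * Real.exp (-(t*x)))
                    * gammaPDFReal α β x) := by
                  refine tsum_congr fun k => ?_
                  rw [show gammaPDF (α + (k:ℕ)) (β + t) x
                      = ENNReal.ofReal (gammaPDFReal (α + (k:ℕ)) (β + t) x) from rfl,
                    ← ENNReal.ofReal_mul (hP k), hterm k]
              _ = ENNReal.ofReal (∑' k : ℕ, ((t*x)^k / k.factorial * Real.exp (-(t*x)))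
                    * gammaPDFReal α β x) := by
                  refine (ENNReal.ofReal_tsum_of_nonneg (fun k => ?_) ?_).symm
                  · have htx : (0:ℝ) ≤ t * x := mul_nonneg ht hxle
                    have := gammaPDFReal_nonneg hα hβ x
                    positivity
                  · exact ((Real.summable_pow_div_factorial (t*x)).mul_right _).mul_right _
              _ = gammaPDF α β x := by
                  rw [show gammaPDF α β x = ENNReal.ofReal (gammaPDFReal α β x) from rfl]
                  congr 1
                  have hre : ∀ k : ℕ, (t*x)^k / (k.factorial:ℝ) * Real.exp (-(t*x)) * gammaPDFReal α β x
                      = (t*x)^k / k.factorial * (Real.exp (-(t*x)) * gammaPDFReal α β x) := by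
                    intro k; ring
                  simp_rw [hre]
                  rw [tsum_mul_right]
                  have hexpsum : ∑' k : ℕ, (t*x)^k / (k.factorial : ℝ) = Real.exp (t*x) := by
                    rw [Real.exp_eq_exp_ℝ, NormedSpace.exp_eq_tsum_div]
                  rw [hexpsum, ← mul_assoc, ← Real.exp_add]
                  simp
      _ = 1 := lintegral_gammaPDF_eq_one hα hβ
  set Q : ℕ → ℝ≥0 := fun k => ⟨pgPMF t α β k, hP k⟩ with hQdef
  have hcoe : ∀ k, ENNReal.ofReal (pgPMF t α β k) = (Q k : ℝ≥0∞) := fun k =>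
    ENNReal.ofReal_eq_coe_nnreal (hP k)
  rw [funext hcoe] at htsum
  have hQsum : Summable Q := ENNReal.tsum_coe_ne_top_iff_summable.mp (by rw [htsum]; simp)
  have hQ1 : ∑' k, Q k = 1 := by
    have := ENNReal.coe_tsum hQsum
    rw [htsum] at this
    exact_mod_cast this
  have hfin : HasSum (fun k => (Q k : ℝ)) ((1 : ℝ≥0) : ℝ) := by
    rw [NNReal.hasSum_coe, ← hQ1]
    exact hQsum.hasSum
  exact hfin

lemma pgPMF_succ {t α β : ℝ} (hα : 0 < α) (hβ : 0 < β) (ht : 0 ≤ t) (k : ℕ) :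
    ((k:ℝ) + 1) * pgPMF t α β (k+1) = α * t / β * pgPMF t (α+1) β k := by
  unfold pgPMF
  have e1 : Real.Gamma (α + ((k:ℕ)+1 : ℕ)) = Real.Gamma (α + 1 + k) := by
    congr 1; push_cast; ring
  have e2 : (β + t) ^ (α + (((k:ℕ)+1:ℕ) : ℝ)) = (β + t) ^ (α + 1 + (k:ℝ)) := by
    congr 1; push_cast; ring
  have e3 : Real.Gamma (α + 1) = α * Real.Gamma α := Real.Gamma_add_one hα.ne'
  have e4 : β ^ (α + 1) = β ^ α * β := Real.rpow_add_one hβ.ne' α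
  rw [e1, e2, e3, e4, Nat.factorial_succ, pow_succ]
  have hΓ : Real.Gamma α ≠ 0 := (Real.Gamma_pos_of_pos hα).ne'
  have hf : ((k.factorial : ℝ)) ≠ 0 := Nat.cast_ne_zero.mpr k.factorial_ne_zero
  have hbt : (β + t) ^ (α + 1 + (k:ℝ)) ≠ 0 := (Real.rpow_pos_of_pos (by linarith) _).ne'
  field_simp
  push_cast
  ring

lemma pgPMF_succ2 {t α β : ℝ} (hα : 0 < α) (hβ : 0 < β) (ht : 0 ≤ t) (k : ℕ) :
    ((k:ℝ) + 2) * ((k:ℝ) + 1) * pgPMF t α β (k+2)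
      = α * (α+1) * t^2 / β^2 * pgPMF t (α+2) β k := by
  have h1 := pgPMF_succ hα hβ ht (k+1)
  have h2 := pgPMF_succ (by linarith : (0:ℝ) < α + 1) hβ ht k
  have e : α + 1 + 1 = α + 2 := by ring
  rw [e] at h2
  rw [show k + 2 = k + 1 + 1 by omega]
  push_cast at h1
  have hβ' : β ≠ 0 := hβ.ne'
  calc ((k:ℝ) + 2) * ((k:ℝ) + 1) * pgPMF t α β (k+1+1)
      = ((k:ℝ)+1) * (((k:ℝ)+1+1) * pgPMF t α β (k+1+1)) := by ring
    _ = ((k:ℝ)+1) * (α * t / β * pgPMF t (α+1) β (k+1)) := by rw [h1]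
    _ = α * t / β * (((k:ℝ)+1) * pgPMF t (α+1) β (k+1)) := by ring
    _ = α * t / β * ((α+1) * t / β * pgPMF t (α+2) β k) := by rw [h2]
    _ = α * (α+1) * t^2 / β^2 * pgPMF t (α+2) β k := by field_simp

/-- The second moment of the enrollment process restricted by a cap `L`, i.e. of
`min(N, L)` where `N ~ PG(t, α, β)`. -/
theorem pg_capped_second_moment (α β t : ℝ) (hα : 0 < α) (hβ : 0 < β) (ht : 0 ≤ t)
    (L : ℕ) (hL : 1 ≤ L) :
    (∑' k : ℕ, (min k L : ℝ) ^ 2 * pgPMF t α β k)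
      = α * (α + 1) * t ^ 2 / β ^ 2 * (∑ k ∈ Finset.range (L - 2), pgPMF t (α + 2) β k)
        + α * t / β * (∑ k ∈ Finset.range (L - 1), pgPMF t (α + 1) β k)
        + (L : ℝ) ^ 2 * (1 - ∑ k ∈ Finset.range L, pgPMF t α β k) := by
  have hsum1 : HasSum (pgPMF t α β) 1 := hasSum_pgPMF hα hβ ht
  have hPs : Summable (pgPMF t α β) := hsum1.summable
  have hPnn := pgPMF_nonneg hα hβ ht
  have hgsum : Summable (fun k : ℕ => (min k L : ℝ) ^ 2 * pgPMF t α β k) := by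
    refine Summable.of_nonneg_of_le (fun k => mul_nonneg (by positivity) (hPnn k))
      (fun k => ?_) (hPs.mul_left ((L:ℝ)^2))
    refine mul_le_mul_of_nonneg_right ?_ (hPnn k)
    have h1 : min (k:ℝ) (L:ℝ) ≤ (L:ℝ) := min_le_right _ _
    have h0 : (0:ℝ) ≤ min (k:ℝ) (L:ℝ) := le_min (Nat.cast_nonneg _) (Nat.cast_nonneg _)
    exact pow_le_pow_left₀ h0 h1 2
  rw [← Summable.sum_add_tsum_nat_add L hgsum]
  have htail : ∑' i : ℕ, (min ((i+L : ℕ) : ℝ) (L : ℝ))^2 * pgPMF t α β (i+L)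
      = (L:ℝ)^2 * (1 - ∑ k ∈ Finset.range L, pgPMF t α β k) := by
    have h1 : ∀ i : ℕ, (min ((i+L : ℕ) : ℝ) (L : ℝ))^2 * pgPMF t α β (i+L)
        = (L:ℝ)^2 * pgPMF t α β (i+L) := by
      intro i
      rw [min_eq_right (by exact_mod_cast Nat.le_add_left L i)]
    rw [tsum_congr h1, tsum_mul_left]
    have h2 : ∑ k ∈ Finset.range L, pgPMF t α β k + ∑' i, pgPMF t α β (i+L) = 1 := by
      rw [Summable.sum_add_tsum_nat_add L hPs, hsum1.tsum_eq]
    have h3 : ∑' i, pgPMF t α β (i+L) = 1 - ∑ k ∈ Finset.range L, pgPMF t α β k := by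
      linarith
    rw [h3]
  rw [htail]
  have hsplit : ∑ k ∈ Finset.range L, (min (k:ℝ) (L:ℝ))^2 * pgPMF t α β k
      = ∑ k ∈ Finset.range L, ((k:ℝ)*((k:ℝ)-1) * pgPMF t α β k)
        + ∑ k ∈ Finset.range L, ((k:ℝ) * pgPMF t α β k) := by
    rw [← Finset.sum_add_distrib]
    refine Finset.sum_congr rfl fun k hk => ?_
    rw [min_eq_left (by exact_mod_cast (Nat.le_of_lt (Finset.mem_range.1 hk)))]
    ring
  have hS1 : ∑ k ∈ Finset.range L, ((k:ℝ) * pgPMF t α β k)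
      = α * t / β * ∑ j ∈ Finset.range (L-1), pgPMF t (α+1) β j := by
    obtain ⟨M, rfl⟩ : ∃ M, L = M + 1 := ⟨L - 1, (Nat.succ_pred_eq_of_pos hL).symm⟩
    rw [Finset.sum_range_succ']
    simp only [Nat.cast_zero, zero_mul, add_zero, Nat.add_sub_cancel]
    rw [Finset.mul_sum]
    refine Finset.sum_congr rfl fun j _ => ?_
    have h := pgPMF_succ hα hβ ht j
    push_cast
    linear_combination h
  have hS2 : ∑ k ∈ Finset.range L, ((k:ℝ)*((k:ℝ)-1) * pgPMF t α β k)
      = α * (α+1) * t^2 / β^2 * ∑ j ∈ Finset.range (L-2), pgPMF t (α+2) β j := by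
    match L, hL with
    | 1, _ => simp
    | (M+2), _ =>
      simp only [Nat.add_sub_cancel]
      rw [Finset.sum_range_succ', Finset.sum_range_succ', Finset.mul_sum]
      have hterms : ∀ j ∈ Finset.range M,
          ((j+1+1:ℕ):ℝ)*(((j+1+1:ℕ):ℝ)-1) * pgPMF t α β (j+1+1)
          = α * (α+1) * t^2 / β^2 * pgPMF t (α+2) β j := by
        intro j _
        have h := pgPMF_succ2 hα hβ ht j
        rw [show j + 2 = j + 1 + 1 by omega] at h
        push_cast
        linear_combination h
      rw [Finset.sum_congr rfl hterms]
      norm_num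
  rw [hsplit, hS1, hS2]
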